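/- Let T be a closed subset of [0,1] containing 0 and 1. For every h ∈ H_T, defined by h(t) = ∫_{[0,t)∩T} h^Δ dλ_Δ with h^Δ ∈ L²(λ_Δ), define g(h) : [0,1] → ℝ by g(h)(t) = ∫₀ᵗ ġ(s) ds where ġ(s) = h^Δ(s)·1_T(s) + Σ_{tᵢ ∈ T_rs} h^Δ(tᵢ)·1_{(tᵢ, σ̄(tᵢ)]}(s). Then g(h) ∈ H¹, the restriction of g(h) to T equals h, and ‖g(h)‖_{H¹} = ‖h‖_{H_T}, i.e., ∫₀¹ ġ(s)² ds = ∫_T (h^Δ)² dλ_Δ. -/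

import Mathlib

open MeasureTheory Set
open scoped ENNReal Classical

noncomputable def rhoBar (T : Set ℝ) (t : ℝ) : ℝ :=
  if t = 0 then 0 else sSup {u | u ∈ T ∧ u < t}

noncomputable def sigmaBar (T : Set ℝ) (t : ℝ) : ℝ :=
  if t = 1 then 1 else sInf {u | u ∈ T ∧ t < u}

noncomputable def lamDelta (T : Set ℝ) : Measure ℝ :=
  Measure.map (rhoBar T) (volume.restrict (Icc 0 1))

noncomputable def htilde (g : ℝ → ℝ) (t : ℝ) : ℝ := ∫ s in Ico (0:ℝ) t, g s

noncomputable def jDensity (T : Set ℝ) (g : ℝ → ℝ) (t : ℝ) : ℝ :=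
  if sigmaBar T t = t then g t
  else (htilde g (sigmaBar T t) - htilde g t) / (sigmaBar T t - t)

noncomputable def gDot (T : Set ℝ) (hΔ : ℝ → ℝ) (s : ℝ) : ℝ :=
  if s ∈ T then hΔ s else hΔ (rhoBar T s)

/-!
Since `lamDelta T` is the image of Lebesgue measure on `[0,1]` under the backward jump `rhoBar T`,
integrals against it are Lebesgue integrals of compositions with `rhoBar T`. Off `T`, `gDot T hΔ`
is `hΔ ∘ rhoBar T` by definition, and on `T` the two differ only at left-scattered points, of
which there are countably many. For `t ∈ T` the preimage of `[0,t) ∩ T` under `rhoBar T` is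
`[0,t)` up to the point `t`, which gives the restriction property.
-/

section rhoBar

variable {T : Set ℝ}

lemma bddAbove_setOf_mem_lt (hTsub : T ⊆ Icc 0 1) (t : ℝ) : BddAbove {u | u ∈ T ∧ u < t} :=
  ⟨1, fun _ hu => (hTsub hu.1).2⟩

lemma rhoBar_eq_sSup (hTsub : T ⊆ Icc 0 1) (t : ℝ) :
    rhoBar T t = sSup {u | u ∈ T ∧ u < t} := by
  unfold rhoBar
  split_ifs with ht
  · have hempty : {u | u ∈ T ∧ u < t} = ∅ :=
      eq_empty_of_forall_notMem fun u hu => (ht ▸ hu.2).not_ge (hTsub hu.1).1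
    rw [hempty, Real.sSup_empty]
  · rfl

lemma rhoBar_nonneg (hTsub : T ⊆ Icc 0 1) (t : ℝ) : 0 ≤ rhoBar T t := by
  rw [rhoBar_eq_sSup hTsub]
  exact Real.sSup_nonneg fun u hu => (hTsub hu.1).1

lemma rhoBar_le_self (hTsub : T ⊆ Icc 0 1) {t : ℝ} (ht : 0 ≤ t) : rhoBar T t ≤ t := by
  rw [rhoBar_eq_sSup hTsub]
  exact Real.sSup_le (fun u hu => hu.2.le) ht

lemma le_rhoBar_of_lt (hTsub : T ⊆ Icc 0 1) {u t : ℝ} (hu : u ∈ T) (hut : u < t) :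
    u ≤ rhoBar T t := by
  rw [rhoBar_eq_sSup hTsub]
  exact le_csSup (bddAbove_setOf_mem_lt hTsub t) ⟨hu, hut⟩

lemma rhoBar_mem (hT : IsClosed T) (h0T : (0:ℝ) ∈ T) (hTsub : T ⊆ Icc 0 1) {t : ℝ}
    (ht : 0 ≤ t) : rhoBar T t ∈ T := by
  rcases ht.eq_or_lt with rfl | ht
  · simpa [rhoBar] using h0T
  · rw [rhoBar_eq_sSup hTsub]
    exact hT.closure_subset_iff.2 (fun u hu => hu.1)
      (csSup_mem_closure ⟨0, h0T, ht⟩ (bddAbove_setOf_mem_lt hTsub t))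

lemma monotone_rhoBar (hTsub : T ⊆ Icc 0 1) : Monotone (rhoBar T) := by
  intro a b hab
  rcases eq_empty_or_nonempty {u | u ∈ T ∧ u < a} with hempty | hne
  · rw [rhoBar_eq_sSup hTsub a, hempty, Real.sSup_empty]
    exact rhoBar_nonneg hTsub b
  · rw [rhoBar_eq_sSup hTsub, rhoBar_eq_sSup hTsub]
    exact csSup_le_csSup (bddAbove_setOf_mem_lt hTsub b) hne
      fun u hu => ⟨hu.1, hu.2.trans_le hab⟩

/-- Through `x ↦ -x`, a left-scattered point `s` is one whose image is separated from the images
of the points of `T` below `s`, here by `-rhoBar T s`. -/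
lemma countable_setOf_rhoBar_ne (hTsub : T ⊆ Icc 0 1) :
    {s | s ∈ T ∧ rhoBar T s ≠ s}.Countable := by
  refine (countable_image_gt_image_Iio_within T Neg.neg).mono ?_
  rintro s ⟨hs, hne⟩
  exact ⟨hs, -rhoBar T s, neg_lt_neg ((rhoBar_le_self hTsub (hTsub hs).1).lt_of_ne hne),
      fun _ hu hus => neg_le_neg (le_rhoBar_of_lt hTsub hu hus)⟩

lemma rhoBar_preimage_Ico_inter_ae_eq (hT : IsClosed T) (h0T : (0:ℝ) ∈ T)
    (hTsub : T ⊆ Icc 0 1) {t : ℝ} (ht : t ∈ T) :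
    rhoBar T ⁻¹' (Ico 0 t ∩ T) =ᵐ[volume.restrict (Icc 0 1)] Ico 0 t := by
  refine Filter.eventuallyEq_set.2 ?_
  filter_upwards [ae_restrict_mem measurableSet_Icc, Measure.ae_ne _ t] with s hs hst
  simp only [mem_preimage, mem_inter_iff, mem_Ico, rhoBar_nonneg hTsub s, hs.1, true_and,
    rhoBar_mem hT h0T hTsub hs.1, and_true]
  rcases hst.lt_or_gt with hlt | hgt
  · exact iff_of_true ((rhoBar_le_self hTsub hs.1).trans_lt hlt) hlt
  · exact iff_of_false (le_rhoBar_of_lt hTsub ht hgt).not_gt hgt.not_gt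

end rhoBar

section gDot

variable {T : Set ℝ} (hTsub : T ⊆ Icc 0 1) {hΔ : ℝ → ℝ}
include hTsub

lemma gDot_ae_eq : gDot T hΔ =ᵐ[volume] hΔ ∘ rhoBar T := by
  filter_upwards [(countable_setOf_rhoBar_ne hTsub).ae_notMem volume] with s hs
  by_cases hsT : s ∈ T
  · simp only [gDot, hsT, if_true, Function.comp_apply]
    rw [not_and_not_right.1 hs hsT]
  · simp [gDot, hsT]

lemma memLp_gDot {p : ℝ≥0∞} (hh : MemLp hΔ p (lamDelta T)) :
    MemLp (gDot T hΔ) p (volume.restrict (Icc 0 1)) :=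
  ((memLp_map_measure_iff hh.1 (monotone_rhoBar hTsub).measurable.aemeasurable).1 hh).ae_eq
    (Filter.EventuallyEq.symm (ae_restrict_of_ae (gDot_ae_eq hTsub)))

lemma integral_comp_gDot {E : Type*} [NormedAddCommGroup E] [NormedSpace ℝ E] {F : ℝ → E}
    (hF : AEStronglyMeasurable (fun x => F (hΔ x)) (lamDelta T)) :
    ∫ s in Icc 0 1, F (gDot T hΔ s) = ∫ s, F (hΔ s) ∂(lamDelta T) := by
  rw [lamDelta, integral_map (monotone_rhoBar hTsub).measurable.aemeasurable hF]
  exact integral_congr_ae <| ae_restrict_of_ae <|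
    (gDot_ae_eq hTsub).mono fun s hs => congrArg F hs

lemma setIntegral_Ico_gDot (hT : IsClosed T) (h0T : (0:ℝ) ∈ T)
    (hsm : AEStronglyMeasurable hΔ (lamDelta T)) {t : ℝ} (ht : t ∈ T) :
    ∫ s in Ico 0 t, gDot T hΔ s = ∫ s in Ico 0 t ∩ T, hΔ s ∂(lamDelta T) := by
  have hIco : Ico 0 t ⊆ Icc (0:ℝ) 1 :=
    Ico_subset_Icc_self.trans (Icc_subset_Icc_right (hTsub ht).2)
  rw [lamDelta, setIntegral_map (measurableSet_Ico.inter hT.measurableSet) hsm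
      (monotone_rhoBar hTsub).measurable.aemeasurable,
    setIntegral_congr_set (rhoBar_preimage_Ico_inter_ae_eq hT h0T hTsub ht),
    Measure.restrict_restrict measurableSet_Ico, inter_eq_left.2 hIco]
  exact integral_congr_ae (ae_restrict_of_ae (gDot_ae_eq hTsub))

end gDot

theorem stmt_10_general (T : Set ℝ) (hT : IsClosed T) (hTsub : T ⊆ Icc 0 1)
    (h0T : (0:ℝ) ∈ T)
    (hΔ : ℝ → ℝ) (hh : MemLp hΔ 2 (lamDelta T)) :
    MemLp (gDot T hΔ) 2 (volume.restrict (Icc 0 1)) ∧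
    (∀ t ∈ T, (∫ s in Ico (0:ℝ) t, gDot T hΔ s)
        = ∫ s in Ico (0:ℝ) t ∩ T, hΔ s ∂(lamDelta T)) ∧
    (∫ s in Icc (0:ℝ) 1, (gDot T hΔ s)^2) = ∫ s, (hΔ s)^2 ∂(lamDelta T) :=
  ⟨memLp_gDot hTsub hh, fun _ ht => setIntegral_Ico_gDot hTsub hT h0T hh.1 ht,
    integral_comp_gDot hTsub (F := fun x => x ^ 2) (hh.1.pow 2)⟩

theorem stmt_10 (T : Set ℝ) (hT : IsClosed T) (hTsub : T ⊆ Icc 0 1)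
    (h0T : (0:ℝ) ∈ T) (h1T : (1:ℝ) ∈ T)
    (hΔ : ℝ → ℝ) (hh : MemLp hΔ 2 (lamDelta T)) :
    MemLp (gDot T hΔ) 2 (volume.restrict (Icc 0 1)) ∧
    (∀ t ∈ T, (∫ s in Ico (0:ℝ) t, gDot T hΔ s)
        = ∫ s in Ico (0:ℝ) t ∩ T, hΔ s ∂(lamDelta T)) ∧
    (∫ s in Icc (0:ℝ) 1, (gDot T hΔ s)^2) = ∫ s, (hΔ s)^2 ∂(lamDelta T) :=
  stmt_10_general T hT hTsub h0T hΔ hh
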